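/- arXiv:2008.05631 — 2 statements merged into one kernel-verified Lean document; each statement's English description precedes it below -/
import Mathlib

section
/- Let K and r be positive integers with K > 3, 2 ≤ r, 2·r ≤ K, and suppose r does not divide K. Let m = K/r (as a real number), b = ⌊m⌋, and m̂ = b + 1. Then (1/(r−1))·(b² − b)/(b·m̂ − m) < (1/(r−1))·(1 − r/K). -/
/-!
Write m = K/r and b = ⌊m⌋, so that 1 - r/K = 1 - 1/m. After clearing the positive
denominators the claim becomes
  (m - 1)(b(b + 1) - m) - m(b² - b) = (m - b)(b + 1 - m) > 0,
which holds exactly because m is not an integer: b < m < b + 1.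
-/

lemma sq_sub_self_div_lt_one_sub_inv {b m : ℝ} (hb : 1 ≤ b) (hbm : b < m) (hmb : m < b + 1) :
    (b ^ 2 - b) / (b * (b + 1) - m) < 1 - 1 / m := by
  have hm : 0 < m := by linarith
  have hden : 0 < b * (b + 1) - m := by nlinarith
  rw [div_lt_iff₀ hden, one_sub_div hm.ne', div_mul_eq_mul_div, lt_div_iff₀ hm]
  linear_combination mul_pos (sub_pos.mpr hbm) (sub_pos.mpr hmb)

lemma floor_natCast_div_natCast_lt {K r : ℕ} (hr : r ≠ 0) (hnd : ¬ r ∣ K) :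
    (⌊(K : ℝ) / r⌋ : ℝ) < K / r := by
  refine (Int.floor_le _).lt_of_ne fun h => hnd ?_
  have hK : (K : ℤ) = ⌊(K : ℝ) / r⌋ * r := by
    exact_mod_cast (div_eq_iff (Nat.cast_ne_zero.mpr hr)).mp h.symm
  exact Int.natCast_dvd_natCast.mp ⟨_, hK.trans (mul_comm _ _)⟩

theorem stmt_4_general (K r : ℕ) (hr : 2 ≤ r) (hrK : 2 * r ≤ K)
    (hnd : ¬ r ∣ K) :
    (1 / ((r : ℝ) - 1)) *
        (((⌊(K : ℝ) / (r : ℝ)⌋ : ℝ) ^ 2 - (⌊(K : ℝ) / (r : ℝ)⌋ : ℝ)) /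
          ((⌊(K : ℝ) / (r : ℝ)⌋ : ℝ) * ((⌊(K : ℝ) / (r : ℝ)⌋ : ℝ) + 1) - (K : ℝ) / (r : ℝ))) <
      (1 / ((r : ℝ) - 1)) * (1 - (r : ℝ) / (K : ℝ)) := by
  have hr1 : (1 : ℝ) < r := by exact_mod_cast hr
  have hm : 1 ≤ (K : ℝ) / r := by
    rw [one_le_div (by linarith)]
    exact_mod_cast (by omega : r ≤ K)
  have hb : (1 : ℝ) ≤ ⌊(K : ℝ) / r⌋ := by exact_mod_cast Int.le_floor.mpr (by exact_mod_cast hm)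
  refine mul_lt_mul_of_pos_left ?_ (one_div_pos.mpr (sub_pos.mpr hr1))
  have key := sq_sub_self_div_lt_one_sub_inv hb (floor_natCast_div_natCast_lt (by omega) hnd)
    (Int.lt_floor_add_one _)
  rwa [one_div_div] at key

/-- Corollary 2: when m = K/r is not an integer, the FLCD communication load is
strictly smaller than (1/(r−1))·(1 − r/K). -/
theorem stmt_4 (K r : ℕ) (hK : 3 < K) (hr : 2 ≤ r) (hrK : 2 * r ≤ K)
    (hnd : ¬ r ∣ K) :
    (1 / ((r : ℝ) - 1)) *
        (((⌊(K : ℝ) / (r : ℝ)⌋ : ℝ) ^ 2 - (⌊(K : ℝ) / (r : ℝ)⌋ : ℝ)) /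
          ((⌊(K : ℝ) / (r : ℝ)⌋ : ℝ) * ((⌊(K : ℝ) / (r : ℝ)⌋ : ℝ) + 1) - (K : ℝ) / (r : ℝ))) <
      (1 / ((r : ℝ) - 1)) * (1 - (r : ℝ) / (K : ℝ)) :=
  stmt_4_general K r hr hrK hnd
end

section
/- Let K and r be positive integers with K > 3, 2 ≤ r, 2·r ≤ K. Let m = K/r (as a real number), b = ⌊m⌋, and m̂ = b + 1. Then L_FLCD(K,r) = (1/(r−1))·(b² − b)/(b·m̂ − m) ≤ (1/(r−1))·(1 − r/K), with equality if and only if r divides K. -/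
/-- Combined statement: the FLCD communication load is at most the KR load
(1/(r−1))·(1 − r/K), with equality if and only if r divides K. -/
theorem stmt_8 (K r : ℕ) (hK : 3 < K) (hr : 2 ≤ r) (hrK : 2 * r ≤ K) :
    (1 / ((r : ℝ) - 1)) *
        (((⌊(K : ℝ) / (r : ℝ)⌋ : ℝ) ^ 2 - (⌊(K : ℝ) / (r : ℝ)⌋ : ℝ)) /
          ((⌊(K : ℝ) / (r : ℝ)⌋ : ℝ) * ((⌊(K : ℝ) / (r : ℝ)⌋ : ℝ) + 1) - (K : ℝ) / (r : ℝ))) ≤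
      (1 / ((r : ℝ) - 1)) * (1 - (r : ℝ) / (K : ℝ)) ∧
    ((1 / ((r : ℝ) - 1)) *
        (((⌊(K : ℝ) / (r : ℝ)⌋ : ℝ) ^ 2 - (⌊(K : ℝ) / (r : ℝ)⌋ : ℝ)) /
          ((⌊(K : ℝ) / (r : ℝ)⌋ : ℝ) * ((⌊(K : ℝ) / (r : ℝ)⌋ : ℝ) + 1) - (K : ℝ) / (r : ℝ))) =
      (1 / ((r : ℝ) - 1)) * (1 - (r : ℝ) / (K : ℝ)) ↔ r ∣ K) := by
  have hr0 : (0:ℝ) < (r:ℝ) := by exact_mod_cast Nat.lt_of_lt_of_le (by norm_num) hr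
  have hK0 : (0:ℝ) < (K:ℝ) := by exact_mod_cast Nat.lt_of_lt_of_le (by norm_num) hK.le
  set m : ℝ := (K:ℝ)/(r:ℝ) with hm
  set b : ℤ := ⌊m⌋ with hbdef
  have hm0 : 0 < m := by positivity
  have hm2 : (2:ℝ) ≤ m := by
    rw [hm, le_div_iff₀ hr0]
    exact_mod_cast hrK
  have hbm : (b:ℝ) ≤ m := Int.floor_le m
  have hbm1 : m < (b:ℝ) + 1 := Int.lt_floor_add_one m
  have hb2 : (2:ℝ) ≤ (b:ℝ) := by
    have : (2:ℤ) ≤ b := Int.le_floor.mpr (by exact_mod_cast hm2)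
    exact_mod_cast this
  have hD : 0 < (b:ℝ)*((b:ℝ)+1) - m := by nlinarith
  have hrKeq : 1 - (r:ℝ)/(K:ℝ) = (m-1)/m := by
    rw [hm]; field_simp
  have hr1 : 0 < (r:ℝ) - 1 := by
    have : (2:ℝ) ≤ (r:ℝ) := by exact_mod_cast hr
    linarith
  have hinv : 0 < 1/((r:ℝ)-1) := by positivity
  have key : ((b:ℝ)^2 - (b:ℝ))/((b:ℝ)*((b:ℝ)+1) - m) ≤ (m-1)/m := by
    rw [div_le_div_iff₀ hD hm0]; nlinarith [mul_nonneg (sub_nonneg.mpr hbm) (by linarith : (0:ℝ) ≤ 1 - (m - (b:ℝ)))]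
  constructor
  · rw [hrKeq]; exact mul_le_mul_of_nonneg_left key hinv.le
  · rw [hrKeq]
    constructor
    · intro h
      have h2 : ((b:ℝ)^2 - (b:ℝ))/((b:ℝ)*((b:ℝ)+1) - m) = (m-1)/m :=
        mul_left_cancel₀ (ne_of_gt hinv) h
      have h3 : ((b:ℝ)^2 - (b:ℝ))*m = (m-1)*((b:ℝ)*((b:ℝ)+1) - m) :=
        (div_eq_div_iff hD.ne' hm0.ne').mp h2
      have h4 : (m - (b:ℝ)) * (1 - (m - (b:ℝ))) = 0 := by nlinarith
      have h5 : m = (b:ℝ) := by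
        rcases mul_eq_zero.mp h4 with h | h
        · linarith
        · linarith
      have h6 : (K:ℝ) = (b:ℝ) * (r:ℝ) := by
        rw [hm] at h5; field_simp at h5; linarith
      have h7 : (K:ℤ) = b * (r:ℤ) := by exact_mod_cast h6
      have : (r:ℤ) ∣ (K:ℤ) := ⟨b, by linarith⟩
      exact_mod_cast this
    · rintro ⟨c, hc⟩
      have hc' : m = (c:ℝ) := by
        rw [hm, hc]; push_cast; field_simp
      have hbc : b = (c:ℤ) := by rw [hbdef, hc']; exact_mod_cast Int.floor_natCast c
      have hmb : m = (b:ℝ) := by rw [hc', hbc]; norm_num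
      rw [hmb]
      have hfrac : ((b:ℝ)^2 - (b:ℝ))/((b:ℝ)*((b:ℝ)+1) - (b:ℝ)) = ((b:ℝ)-1)/(b:ℝ) := by
        rw [div_eq_div_iff (by nlinarith) (by linarith)]
        ring
      rw [hfrac]
end
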